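/- arXiv:1303.6751 — 3 statements merged into one kernel-verified Lean document; each statement's English description precedes it below -/
import Mathlib

section
/- Let n ≥ 1, let r > 0, and let ℓ be a non-negative integer. Then there exists a real-valued function φ ∈ 𝒮(ℝⁿ) such that supp φ ⊂ {x ∈ ℝⁿ : |x| ≤ r}, ∫_{ℝⁿ} φ(x)² dx ≠ 0, and ∫_{ℝⁿ} x^β φ(x) dx = 0 for every multi-index β with |β| ≤ ℓ. -/
/-!
Take a bump function `b` on `ℝ` supported in `[-r/√n, r/√n]` and let `f = b⁽ℓ⁺¹⁾`. Integrating by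
parts `m` times gives `∫ tᵏ g⁽ᵐ⁾ = (-1)ᵐ k(k-1)⋯(k-m+1) ∫ tᵏ⁻ᵐ g` for smooth compactly supported
`g`, so the moments of `f` of order `≤ ℓ` vanish while `∫ tˡ⁺¹ f = ± (ℓ+1)! ∫ b ≠ 0`; in
particular `f ≠ 0`. The tensor product `φ(x) = ∏ᵢ f(xᵢ)` is supported in the ball of radius `r`,
and both `∫ φ²` and `∫ x^β φ` factor into one-dimensional integrals; in the latter every factor
vanishes, since `βᵢ ≤ |β| ≤ ℓ`.
-/

open MeasureTheory
open scoped ContDiff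

section Moments

variable {g : ℝ → ℝ}

theorem HasCompactSupport.integral_pow_mul_deriv (hg : HasCompactSupport g)
    (hg_diff : ContDiff ℝ 1 g) (k : ℕ) :
    ∫ t, t ^ k * deriv g t = -(k * ∫ t, t ^ (k - 1) * g t) := by
  rw [← integral_const_mul]
  simp_rw [← mul_assoc]
  exact integral_mul_deriv_eq_deriv_mul_of_integrable
    (fun t _ => hasDerivAt_pow k t) (fun t _ => (hg_diff.differentiable one_ne_zero t).hasDerivAt)
    ((by fun_prop : Continuous fun t => t ^ k * deriv g t).integrable_of_hasCompactSupport
      hg.deriv.mul_left)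
    ((by fun_prop : Continuous fun t => k * t ^ (k - 1) * g t).integrable_of_hasCompactSupport
      hg.mul_left)
    ((by fun_prop : Continuous fun t => t ^ k * g t).integrable_of_hasCompactSupport hg.mul_left)

/-- For `k < m` the falling factorial vanishes, so the truncated `k - m` is harmless. -/
theorem HasCompactSupport.integral_pow_mul_iteratedDeriv (hg : HasCompactSupport g)
    (hg_smooth : ContDiff ℝ ∞ g) (k m : ℕ) :
    ∫ t, t ^ k * iteratedDeriv m g t = (-1) ^ m * k.descFactorial m * ∫ t, t ^ (k - m) * g t := by
  induction m generalizing g with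
  | zero => simp
  | succ m ih =>
    rw [iteratedDeriv_succ', ih hg.deriv (contDiff_infty_iff_deriv.mp hg_smooth).2,
      hg.integral_pow_mul_deriv (hg_smooth.of_le (by simp)), Nat.sub_sub,
      Nat.descFactorial_succ]
    push_cast
    ring

theorem HasCompactSupport.integral_pow_mul_iteratedDeriv_of_lt (hg : HasCompactSupport g)
    (hg_smooth : ContDiff ℝ ∞ g) {k m : ℕ} (hkm : k < m) :
    ∫ t, t ^ k * iteratedDeriv m g t = 0 := by
  simp [hg.integral_pow_mul_iteratedDeriv hg_smooth, Nat.descFactorial_eq_zero_iff_lt.mpr hkm]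

theorem HasCompactSupport.integral_pow_mul_iteratedDeriv_self (hg : HasCompactSupport g)
    (hg_smooth : ContDiff ℝ ∞ g) (m : ℕ) :
    ∫ t, t ^ m * iteratedDeriv m g t = (-1) ^ m * m.factorial * ∫ t, g t := by
  simp [hg.integral_pow_mul_iteratedDeriv hg_smooth, Nat.descFactorial_self]

end Moments

theorem EuclideanSpace.norm_le_sqrt_card_mul {ι : Type*} [Fintype ι] {x : EuclideanSpace ℝ ι}
    {a : ℝ} (ha : 0 ≤ a) (hx : ∀ i, |x i| ≤ a) : ‖x‖ ≤ √(Fintype.card ι) * a := by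
  rw [EuclideanSpace.norm_eq, ← Real.sqrt_sq ha, ← Real.sqrt_mul (Nat.cast_nonneg _)]
  refine Real.sqrt_le_sqrt ?_
  calc ∑ i, ‖x i‖ ^ 2 ≤ ∑ _i : ι, a ^ 2 := Finset.sum_le_sum fun i _ => by
        simpa only [Real.norm_eq_abs] using pow_le_pow_left₀ (abs_nonneg _) (hx i) 2
    _ = Fintype.card ι * a ^ 2 := by simp

theorem EuclideanSpace.tsupport_prod_apply_subset {ι : Type*} [Fintype ι] {f : ℝ → ℝ} {a : ℝ}
    (ha : 0 ≤ a) (hf : tsupport f ⊆ Metric.closedBall 0 a) :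
    tsupport (fun x : EuclideanSpace ℝ ι => ∏ i, f (x i)) ⊆
      Metric.closedBall 0 (√(Fintype.card ι) * a) := by
  refine closure_minimal (fun x hx => ?_) Metric.isClosed_closedBall
  have hx_coord : ∀ i, |x i| ≤ a := fun i => by
    simpa using hf (subset_tsupport _ (Finset.prod_ne_zero_iff.mp hx i (Finset.mem_univ i)))
  simpa using EuclideanSpace.norm_le_sqrt_card_mul ha hx_coord

theorem EuclideanSpace.integral_prod_apply {ι : Type*} [Fintype ι] (f : ι → ℝ → ℝ) :
    ∫ x : EuclideanSpace ℝ ι, ∏ i, f i (x i) = ∏ i, ∫ t, f i t := by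
  rw [← (PiLp.volume_preserving_toLp ι).integral_comp (MeasurableEquiv.toLp 2 _).measurableEmbedding]
  exact integral_fintype_prod_volume_eq_prod f

theorem tsupport_iteratedDeriv_subset {𝕜 F : Type*} [NontriviallyNormedField 𝕜]
    [NormedAddCommGroup F] [NormedSpace 𝕜 F] {f : 𝕜 → F} (m : ℕ) :
    tsupport (iteratedDeriv m f) ⊆ tsupport f :=
  (tsupport_comp_subset (g := fun L : ContinuousMultilinearMap 𝕜 (fun _ : Fin m => 𝕜) F =>
    L fun _ => 1) rfl _).trans (tsupport_iteratedFDeriv_subset m)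

theorem Continuous.integral_sq_pos_of_hasCompactSupport {X : Type*} [TopologicalSpace X]
    [MeasurableSpace X] [OpensMeasurableSpace X] {μ : Measure X} [μ.IsOpenPosMeasure]
    [IsFiniteMeasureOnCompacts μ] {f : X → ℝ} (hf : Continuous f) (hf_supp : HasCompactSupport f)
    (hf_ne : f ≠ 0) : 0 < ∫ x, f x ^ 2 ∂μ := by
  obtain ⟨x, hx⟩ := Function.ne_iff.mp hf_ne
  have hf_sq_supp : HasCompactSupport fun x => f x ^ 2 :=
    hf_supp.comp_left (g := fun s : ℝ => s ^ 2) (zero_pow two_ne_zero)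
  exact (hf.pow 2).integral_pos_of_hasCompactSupport_nonneg_nonzero hf_sq_supp
    (fun x => sq_nonneg (f x)) (pow_ne_zero 2 hx)

theorem exists_contDiff_tsupport_subset_closedBall_ne_zero_moments_eq_zero {a : ℝ} (ha : 0 < a)
    (ℓ : ℕ) : ∃ f : ℝ → ℝ, ContDiff ℝ ∞ f ∧ tsupport f ⊆ Metric.closedBall 0 a ∧ f ≠ 0 ∧
      ∀ k ≤ ℓ, ∫ t, t ^ k * f t = 0 := by
  let b : ContDiffBump (0 : ℝ) := ⟨a / 2, a, half_pos ha, half_lt_self ha⟩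
  have hb_supp : HasCompactSupport b := b.hasCompactSupport
  refine ⟨iteratedDeriv (ℓ + 1) b, ?_, ?_, ?_, fun k hk =>
    hb_supp.integral_pow_mul_iteratedDeriv_of_lt b.contDiff (Nat.lt_succ_of_le hk)⟩
  · rw [iteratedDeriv_eq_iterate]
    exact b.contDiff.iterate_deriv _
  · exact (tsupport_iteratedDeriv_subset _).trans b.tsupport_eq.le
  · intro h_zero
    have h_top := hb_supp.integral_pow_mul_iteratedDeriv_self b.contDiff (ℓ + 1)
    rw [h_zero] at h_top
    simp [b.integral_pos.ne', Nat.factorial_ne_zero] at h_top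

/-- Let `n ≥ 1`, `r > 0` and `ℓ` a non-negative integer.  Then there is a
real-valued Schwartz function `φ` on `ℝⁿ` supported in the ball `{|x| ≤ r}`, with
`∫ φ² ≠ 0`, all of whose moments `∫ x^β φ(x) dx` of order `|β| ≤ ℓ` vanish. -/
theorem stmt_4 (n : ℕ) (hn : 1 ≤ n) (r : ℝ) (hr : 0 < r) (ℓ : ℕ) :
    ∃ φ : SchwartzMap (EuclideanSpace ℝ (Fin n)) ℝ,
      tsupport ⇑φ ⊆ {x : EuclideanSpace ℝ (Fin n) | ‖x‖ ≤ r} ∧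
      (∫ x, (φ x) ^ 2) ≠ 0 ∧
      ∀ β : Fin n → ℕ, (∑ i, β i) ≤ ℓ →
        (∫ x : EuclideanSpace ℝ (Fin n), (∏ i, x i ^ β i) * φ x) = 0 := by
  have hn_sqrt : 0 < √(n : ℝ) := Real.sqrt_pos.mpr (by exact_mod_cast hn)
  obtain ⟨f, hf_smooth, hf_supp, hf_ne, hf_moments⟩ :=
    exists_contDiff_tsupport_subset_closedBall_ne_zero_moments_eq_zero (div_pos hr hn_sqrt) ℓ
  set φ : EuclideanSpace ℝ (Fin n) → ℝ := fun x => ∏ i, f (x i)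
  have hφ_supp : tsupport φ ⊆ Metric.closedBall 0 r := by
    simpa [mul_div_cancel₀ r hn_sqrt.ne'] using
      EuclideanSpace.tsupport_prod_apply_subset (ι := Fin n) (div_pos hr hn_sqrt).le hf_supp
  have hφ_smooth : ContDiff ℝ ∞ φ :=
    contDiff_prod fun i _ => hf_smooth.comp (EuclideanSpace.proj (𝕜 := ℝ) i).contDiff
  have hf_sq : 0 < ∫ t, f t ^ 2 := hf_smooth.continuous.integral_sq_pos_of_hasCompactSupport
    ((isCompact_closedBall 0 _).of_isClosed_subset (isClosed_tsupport f) hf_supp) hf_ne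
  refine ⟨HasCompactSupport.toSchwartzMap
    ((isCompact_closedBall 0 r).of_isClosed_subset (isClosed_tsupport φ) hφ_supp) hφ_smooth,
    fun x hx => by simpa using hφ_supp hx, ?_, fun β hβ => ?_⟩
  · change ∫ x : EuclideanSpace ℝ (Fin n), (∏ i, f (x i)) ^ 2 ≠ 0
    simp only [← Finset.prod_pow]
    rw [EuclideanSpace.integral_prod_apply fun _ t => f t ^ 2]
    exact Finset.prod_ne_zero_iff.mpr fun i _ => hf_sq.ne'
  · change ∫ x : EuclideanSpace ℝ (Fin n), (∏ i, x i ^ β i) * ∏ i, f (x i) = 0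
    simp only [← Finset.prod_mul_distrib]
    rw [EuclideanSpace.integral_prod_apply fun i t => t ^ β i * f t]
    have i₀ : Fin n := ⟨0, hn⟩
    exact Finset.prod_eq_zero (Finset.mem_univ i₀) (hf_moments _
      ((Finset.single_le_sum (fun i _ => Nat.zero_le (β i)) (Finset.mem_univ i₀)).trans hβ))
end

section
/- Let N ≥ 2, n ≥ 1, Nn/2 < s ≤ Nn, Nn/s < p_1,…,p_N < ∞ and 1/p_1+⋯+1/p_N = 1/p. Then there exist real numbers α_1 < -n and α_2 > -n such that α_1/p_1 + α_2/p_2 > -n/p, α_k/p_k < s/N - n/p_k for k = 1, 2, and α_1/p_1 < -n/p_1 - s/N + n/2. -/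
open scoped BigOperators

/-- Let `N ≥ 2`, `n ≥ 1`, `Nn/2 < s ≤ Nn`, `Nn/s < p_k < ∞` for all `k`,
and `1/p = 1/p_1 + ⋯ + 1/p_N`.  Then there exist real numbers `α₁ < -n` and `α₂ > -n` such
that `α₁/p₁ + α₂/p₂ > -n/p`, `α_k/p_k < s/N - n/p_k` for `k = 1, 2`, and
`α₁/p₁ < -n/p₁ - s/N + n/2`. -/
theorem stmt_5 (N n : ℕ) (hN : 2 ≤ N) (hn : 1 ≤ n) (s p : ℝ) (pk : Fin N → ℝ)
    (hs1 : (N * n : ℝ) / 2 < s) (hs2 : s ≤ (N * n : ℝ))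
    (hpk : ∀ k, (N * n : ℝ) / s < pk k)
    (hp : 1 / p = ∑ k, 1 / pk k) :
    ∃ α₁ α₂ : ℝ, α₁ < -(n : ℝ) ∧ -(n : ℝ) < α₂ ∧
      -(n : ℝ) / p < α₁ / pk ⟨0, by omega⟩ + α₂ / pk ⟨1, by omega⟩ ∧
      α₁ / pk ⟨0, by omega⟩ < s / N - n / pk ⟨0, by omega⟩ ∧
      α₂ / pk ⟨1, by omega⟩ < s / N - n / pk ⟨1, by omega⟩ ∧
      α₁ / pk ⟨0, by omega⟩ < -(n : ℝ) / pk ⟨0, by omega⟩ - s / N + n / 2 := by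
  have hNpos : (0:ℝ) < N := by exact_mod_cast (by omega : 0 < N)
  have hnpos : (0:ℝ) < n := by exact_mod_cast (by omega : 0 < n)
  have hNn : (0:ℝ) < (N:ℝ) * n := by positivity
  have hs0 : (0:ℝ) < s := lt_of_le_of_lt (by positivity) hs1
  have hpkpos : ∀ k, 0 < pk k := fun k => lt_trans (by positivity) (hpk k)
  set i0 : Fin N := ⟨0, by omega⟩
  set i1 : Fin N := ⟨1, by omega⟩
  have hne : i0 ≠ i1 := by simp [i0, i1, Fin.ext_iff]
  set p1 := pk i0 with hp1
  set p2 := pk i1 with hp2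
  have hp1p : 0 < p1 := hpkpos i0
  have hp2p : 0 < p2 := hpkpos i1
  have hsum : 1/p1 + 1/p2 ≤ ∑ k, 1 / pk k := by
    have h1 : ({i0, i1} : Finset (Fin N)).sum (fun k => 1 / pk k)
        ≤ ∑ k, 1 / pk k := by
      apply Finset.sum_le_sum_of_subset_of_nonneg (Finset.subset_univ _)
      intro k _ _
      exact (one_div_pos.mpr (hpkpos k)).le
    rwa [Finset.sum_pair hne] at h1
  have hsN : (n:ℝ)/2 < s / N := by
    rw [div_lt_div_iff₀ (by norm_num) hNpos]
    nlinarith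
  refine ⟨-n + p1 * ((n:ℝ)/2 - s/N - n/8), -n + p2 * (s/N - (n:ℝ)/2 + n/4), ?_, ?_, ?_, ?_, ?_, ?_⟩
  · nlinarith
  · nlinarith
  · have h1 : (-n + p1 * ((n:ℝ)/2 - s/N - n/8)) / p1 = -n/p1 + ((n:ℝ)/2 - s/N - n/8) := by
      field_simp
    have h2 : (-n + p2 * (s/N - (n:ℝ)/2 + n/4)) / p2 = -n/p2 + (s/N - (n:ℝ)/2 + n/4) := by
      field_simp
    rw [h1, h2]
    have : -(n:ℝ)/p = -n * (1/p) := by ring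
    rw [this, hp]
    have hnn : -(n:ℝ) * (∑ k, 1 / pk k) ≤ -n * (1/p1 + 1/p2) := by
      apply mul_le_mul_of_nonpos_left hsum (by linarith)
    have he : -(n:ℝ) * (1/p1 + 1/p2) = -n/p1 + -n/p2 := by ring
    linarith
  · have h1 : (-n + p1 * ((n:ℝ)/2 - s/N - n/8)) / p1 = -n/p1 + ((n:ℝ)/2 - s/N - n/8) := by
      field_simp
    rw [h1]
    have : (0:ℝ) < s / N := by positivity
    have hnd : -(n:ℝ)/p1 = -((n:ℝ)/p1) := neg_div _ _
    linarith
  · have h2 : (-n + p2 * (s/N - (n:ℝ)/2 + n/4)) / p2 = -n/p2 + (s/N - (n:ℝ)/2 + n/4) := by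
      field_simp
    rw [h2]
    have hnd : -(n:ℝ)/p2 = -((n:ℝ)/p2) := neg_div _ _
    linarith
  · have h1 : (-n + p1 * ((n:ℝ)/2 - s/N - n/8)) / p1 = -n/p1 + ((n:ℝ)/2 - s/N - n/8) := by
      field_simp
    rw [h1]
    linarith
end

section
/- Let n ≥ 1, let φ ∈ 𝒮(ℝⁿ), let ℓ be a non-negative integer such that ∂^β φ(0) = 0 for all multi-indices β with |β| ≤ ℓ, let 0 < p < ∞, and let α ∈ ℝ satisfy p(ℓ+1) + α > -n. Then ∫_{ℝⁿ} |φ(x)|^p |x|^α dx < ∞. -/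
open MeasureTheory Metric Set Real Module
open scoped ENNReal

private lemma taylor_aux {E F : Type*} [NormedAddCommGroup E] [NormedSpace ℝ E]
    [NormedAddCommGroup F] [NormedSpace ℝ F]
    {f : E → F} (hf : ContDiff ℝ (⊤ : ℕ∞) f) {ℓ : ℕ}
    (h0 : ∀ m : ℕ, m ≤ ℓ → iteratedFDeriv ℝ m f 0 = 0)
    {C : ℝ} (hC : ∀ x, ‖iteratedFDeriv ℝ (ℓ + 1) f x‖ ≤ C) :
    ∀ j, j ≤ ℓ + 1 → ∀ x, ‖iteratedFDeriv ℝ (ℓ + 1 - j) f x‖ ≤ C * ‖x‖ ^ j := by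
  have hC0 : 0 ≤ C := le_trans (norm_nonneg _) (hC 0)
  intro j
  induction j with
  | zero => intro _ x; simpa using hC x
  | succ j ih =>
    intro hj x
    have hj' : j ≤ ℓ + 1 := Nat.le_of_succ_le hj
    set m := ℓ + 1 - (j + 1) with hm'
    have hm : m + 1 = ℓ + 1 - j := by omega
    have hmℓ : m ≤ ℓ := by omega
    have hdiff : ∀ y : E, DifferentiableAt ℝ (iteratedFDeriv ℝ m f) y := fun y =>
      (hf.differentiable_iteratedFDeriv (by exact_mod_cast (show (m : ℕ∞) < ⊤ by exact_mod_cast WithTop.coe_lt_top m))).differentiableAt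
    have key : ∀ y ∈ closedBall (0 : E) ‖x‖,
        ‖fderiv ℝ (iteratedFDeriv ℝ m f) y‖ ≤ C * ‖x‖ ^ j := by
      intro y hy
      rw [norm_fderiv_iteratedFDeriv, hm]
      calc ‖iteratedFDeriv ℝ (ℓ + 1 - j) f y‖ ≤ C * ‖y‖ ^ j := ih hj' y
        _ ≤ C * ‖x‖ ^ j := by
            gcongr
            exact mem_closedBall_zero_iff.mp hy
    have := (convex_closedBall (0 : E) ‖x‖).norm_image_sub_le_of_norm_fderiv_le
      (fun y _ => hdiff y) key (mem_closedBall_self (norm_nonneg x))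
      (mem_closedBall_zero_iff.mpr le_rfl)
    rw [h0 m hmℓ, sub_zero, sub_zero] at this
    calc ‖iteratedFDeriv ℝ m f x‖ ≤ C * ‖x‖ ^ j * ‖x‖ := this
      _ = C * ‖x‖ ^ (j + 1) := by ring

private lemma near_zero_aux {E : Type*} [NormedAddCommGroup E] [NormedSpace ℝ E]
    [FiniteDimensional ℝ E] [MeasurableSpace E] [BorelSpace E]
    {μ : Measure E} [μ.IsAddHaarMeasure] {s : ℝ} (hs : -(finrank ℝ E : ℝ) < s) :
    ∫⁻ x in ball (0 : E) 1, ENNReal.ofReal (‖x‖ ^ s) ∂μ < ⊤ := by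
  rcases le_or_gt 0 s with hs0 | hs0
  · calc ∫⁻ x in ball (0 : E) 1, ENNReal.ofReal (‖x‖ ^ s) ∂μ
        ≤ ∫⁻ _ in ball (0 : E) 1, 1 ∂μ := by
          refine setLIntegral_mono' measurableSet_ball fun x hx => ?_
          simpa using ENNReal.ofReal_le_ofReal
            (Real.rpow_le_one (norm_nonneg x) (mem_ball_zero_iff.mp hx).le hs0)
      _ = μ (ball (0 : E) 1) := by simp
      _ < ⊤ := measure_ball_lt_top
  · have hmeas : AEMeasurable (fun x : E => ‖x‖ ^ s) (μ.restrict (ball (0 : E) 1)) :=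
      (measurable_norm.pow_const s).aemeasurable
    rw [lintegral_eq_lintegral_meas_le _ (Filter.Eventually.of_forall fun x =>
      Real.rpow_nonneg (norm_nonneg x) s) hmeas]
    set ν := μ.restrict (ball (0 : E) 1)
    have hmB : μ (ball (0 : E) 1) < ⊤ := measure_ball_lt_top
    calc ∫⁻ t in Ioi (0 : ℝ), ν {a : E | t ≤ ‖a‖ ^ s}
        ≤ ∫⁻ t in Ioc (0 : ℝ) 1 ∪ Ioi 1, ν {a : E | t ≤ ‖a‖ ^ s} :=
          lintegral_mono_set Ioi_subset_Ioc_union_Ioi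
      _ ≤ (∫⁻ t in Ioc (0 : ℝ) 1, ν {a : E | t ≤ ‖a‖ ^ s}) +
          ∫⁻ t in Ioi (1 : ℝ), ν {a : E | t ≤ ‖a‖ ^ s} := lintegral_union_le _ _ _
      _ < ⊤ := by
        refine ENNReal.add_lt_top.2 ⟨?_, ?_⟩
        · calc (∫⁻ t in Ioc (0 : ℝ) 1, ν {a : E | t ≤ ‖a‖ ^ s})
              ≤ ∫⁻ _ in Ioc (0 : ℝ) 1, μ (ball (0 : E) 1) := by
                refine setLIntegral_mono' measurableSet_Ioc fun t _ => ?_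
                exact le_trans (measure_mono (subset_univ _))
                  (le_of_eq (Measure.restrict_apply_univ _))
            _ = μ (ball (0 : E) 1) * volume (Ioc (0 : ℝ) 1) := by
                rw [setLIntegral_const]
            _ < ⊤ := ENNReal.mul_lt_top hmB (by simp)
        · have hsub : ∀ t ∈ Ioi (1 : ℝ), ν {a : E | t ≤ ‖a‖ ^ s} ≤
              ENNReal.ofReal (t ^ (s⁻¹ * finrank ℝ E)) * μ (ball (0 : E) 1) := by
            intro t ht
            have ht1 : (1 : ℝ) < t := ht
            have ht0 : (0 : ℝ) < t := lt_trans one_pos ht1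
            have hsubset : {a : E | t ≤ ‖a‖ ^ s} ⊆ closedBall (0 : E) (t ^ s⁻¹) := by
              intro a ha
              rw [mem_closedBall_zero_iff]
              rcases eq_or_ne a 0 with rfl | ha0
              · simpa using Real.rpow_nonneg ht0.le s⁻¹
              · have hna : 0 < ‖a‖ := norm_pos_iff.mpr ha0
                exact (Real.le_rpow_inv_iff_of_neg hna ht0 hs0).mpr ha
            calc ν {a : E | t ≤ ‖a‖ ^ s} ≤ μ (closedBall (0 : E) (t ^ s⁻¹)) :=
                  le_trans (Measure.restrict_le_self _) (measure_mono hsubset)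
              _ = ENNReal.ofReal ((t ^ s⁻¹) ^ finrank ℝ E) * μ (ball (0 : E) 1) :=
                  μ.addHaar_closedBall _ (Real.rpow_nonneg ht0.le _)
              _ = ENNReal.ofReal (t ^ (s⁻¹ * finrank ℝ E)) * μ (ball (0 : E) 1) := by
                  rw [← Real.rpow_natCast (t ^ s⁻¹) (finrank ℝ E), ← Real.rpow_mul ht0.le]
          calc ∫⁻ t in Ioi (1 : ℝ), ν {a : E | t ≤ ‖a‖ ^ s}
              ≤ ∫⁻ t in Ioi (1 : ℝ),
                  ENNReal.ofReal (t ^ (s⁻¹ * finrank ℝ E)) * μ (ball (0 : E) 1) :=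
                setLIntegral_mono' measurableSet_Ioi hsub
            _ = (∫⁻ t in Ioi (1 : ℝ), ENNReal.ofReal (t ^ (s⁻¹ * finrank ℝ E))) *
                  μ (ball (0 : E) 1) := lintegral_mul_const' _ _ hmB.ne
            _ < ⊤ := by
                refine ENNReal.mul_lt_top ?_ hmB
                refine IntegrableOn.setLIntegral_lt_top ?_
                refine integrableOn_Ioi_rpow_of_lt ?_ one_pos
                rw [inv_mul_eq_div, div_lt_iff_of_neg hs0]
                nlinarith

/-- Let `φ` be a Schwartz function on `ℝⁿ` all of whose derivatives of
order `≤ ℓ` vanish at the origin, let `0 < p < ∞` and let `α ∈ ℝ` satisfy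
`p(ℓ+1) + α > -n`.  Then `∫ |φ(x)|^p |x|^α dx < ∞`. -/
theorem stmt_7 (n : ℕ) (hn : 1 ≤ n) (φ : SchwartzMap (EuclideanSpace ℝ (Fin n)) ℂ)
    (ℓ : ℕ) (hφ : ∀ m : ℕ, m ≤ ℓ → iteratedFDeriv ℝ m (⇑φ) 0 = 0)
    (p : ℝ) (hp : 0 < p) (α : ℝ) (hα : -(n : ℝ) < p * (ℓ + 1) + α) :
    ∫⁻ x : EuclideanSpace ℝ (Fin n), ENNReal.ofReal (‖φ x‖ ^ p * ‖x‖ ^ α) < ⊤ := by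
  set E := EuclideanSpace ℝ (Fin n)
  have hfr : finrank ℝ E = n := finrank_euclideanSpace_fin
  -- Taylor bound near zero
  obtain ⟨C, hCpos, hC⟩ := φ.decay 0 (ℓ + 1)
  simp only [pow_zero, one_mul] at hC
  have hTaylor : ∀ x : E, ‖φ x‖ ≤ C * ‖x‖ ^ (ℓ + 1) := by
    intro x
    have h := taylor_aux (φ.smooth ⊤) hφ hC (ℓ + 1) le_rfl x
    rwa [Nat.sub_self, norm_iteratedFDeriv_zero] at h
  -- decay bound at infinity
  set k : ℕ := ⌈(α + n) / p⌉₊ + 1 with hkdef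
  have hk : α + n < p * k := by
    have h1 : (α + n) / p < (k : ℝ) := by
      refine lt_of_le_of_lt (Nat.le_ceil _) ?_
      push_cast [hkdef]; linarith
    rw [div_lt_iff₀ hp] at h1
    linarith [h1]
  obtain ⟨D, hDpos, hD⟩ := φ.decay k 0
  simp only [norm_iteratedFDeriv_zero] at hD
  set r : ℝ := p * k - α with hrdef
  have hrn : (n : ℝ) < r := by simp only [hrdef]; linarith
  have hr0 : 0 < r := lt_of_le_of_lt (by positivity) hrn
  set s : ℝ := p * (ℓ + 1) + α with hsdef
  have hφ0 : ‖φ (0 : E)‖ = 0 := by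
    have h := congrArg norm (hφ 0 (Nat.zero_le _))
    simpa [norm_iteratedFDeriv_zero] using h
  rw [← lintegral_add_compl (fun x : E => ENNReal.ofReal (‖φ x‖ ^ p * ‖x‖ ^ α))
    (measurableSet_ball (x := (0 : E)) (ε := 1))]
  refine ENNReal.add_lt_top.2 ⟨?_, ?_⟩
  · -- integral over the unit ball
    have hbound : ∀ x ∈ ball (0 : E) 1, ENNReal.ofReal (‖φ x‖ ^ p * ‖x‖ ^ α) ≤
        ENNReal.ofReal (C ^ p * ‖x‖ ^ s) := by
      intro x _
      refine ENNReal.ofReal_le_ofReal ?_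
      rcases eq_or_ne x 0 with rfl | hx
      · rw [hφ0, Real.zero_rpow hp.ne', zero_mul]
        positivity
      · have hx0 : 0 < ‖x‖ := norm_pos_iff.mpr hx
        have h1 : ‖φ x‖ ^ p ≤ (C * ‖x‖ ^ (ℓ + 1)) ^ p :=
          Real.rpow_le_rpow (norm_nonneg _) (hTaylor x) hp.le
        calc ‖φ x‖ ^ p * ‖x‖ ^ α ≤ (C * ‖x‖ ^ (ℓ + 1)) ^ p * ‖x‖ ^ α := by
              gcongr
          _ = C ^ p * ‖x‖ ^ s := by
              rw [Real.mul_rpow hCpos.le (by positivity), ← Real.rpow_natCast ‖x‖ (ℓ + 1),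
                ← Real.rpow_mul (norm_nonneg x), mul_assoc, ← Real.rpow_add hx0]
              have hcast : ((ℓ + 1 : ℕ) : ℝ) * p + α = s := by push_cast; ring
              rw [hcast]
    calc ∫⁻ x in ball (0 : E) 1, ENNReal.ofReal (‖φ x‖ ^ p * ‖x‖ ^ α)
        ≤ ∫⁻ x in ball (0 : E) 1, ENNReal.ofReal (C ^ p * ‖x‖ ^ s) :=
          setLIntegral_mono' measurableSet_ball hbound
      _ = ENNReal.ofReal (C ^ p) * ∫⁻ x in ball (0 : E) 1, ENNReal.ofReal (‖x‖ ^ s) := by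
          simp_rw [ENNReal.ofReal_mul (Real.rpow_nonneg hCpos.le p)]
          exact lintegral_const_mul' _ _ ENNReal.ofReal_ne_top
      _ < ⊤ := by
          refine ENNReal.mul_lt_top ENNReal.ofReal_lt_top ?_
          refine near_zero_aux ?_
          rw [hfr]
          exact hα
  · -- integral over the complement of the unit ball
    have hbound : ∀ x ∈ (ball (0 : E) 1)ᶜ, ENNReal.ofReal (‖φ x‖ ^ p * ‖x‖ ^ α) ≤
        ENNReal.ofReal (D ^ p * 2 ^ r * (1 + ‖x‖) ^ (-r)) := by
      intro x hx
      have hx1 : (1 : ℝ) ≤ ‖x‖ := by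
        have := mem_ball_zero_iff.not.mp hx
        linarith [not_lt.mp this]
      have hx0 : (0 : ℝ) < ‖x‖ := lt_of_lt_of_le one_pos hx1
      refine ENNReal.ofReal_le_ofReal ?_
      have h1 : ‖φ x‖ ≤ D * ‖x‖ ^ (-(k : ℝ)) := by
        rw [Real.rpow_neg (norm_nonneg x), Real.rpow_natCast, ← div_eq_mul_inv,
          le_div_iff₀ (by positivity)]
        rw [mul_comm]
        exact hD x
      have h2 : ‖φ x‖ ^ p ≤ D ^ p * ‖x‖ ^ (-(k : ℝ) * p) := by
        calc ‖φ x‖ ^ p ≤ (D * ‖x‖ ^ (-(k : ℝ))) ^ p :=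
              Real.rpow_le_rpow (norm_nonneg _) h1 hp.le
          _ = D ^ p * ‖x‖ ^ (-(k : ℝ) * p) := by
              rw [Real.mul_rpow hDpos.le (Real.rpow_nonneg (norm_nonneg x) _),
                ← Real.rpow_mul (norm_nonneg x)]
      have h3 : ‖x‖ ^ (-r) ≤ 2 ^ r * (1 + ‖x‖) ^ (-r) := by
        have h4 : (2 * ‖x‖ : ℝ) ^ (-r) ≤ (1 + ‖x‖) ^ (-r) :=
          Real.rpow_le_rpow_of_nonpos (by linarith) (by linarith) (neg_nonpos.mpr hr0.le)
        calc ‖x‖ ^ (-r) = 2 ^ r * (2 * ‖x‖) ^ (-r) := by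
              rw [Real.mul_rpow zero_le_two (norm_nonneg x), ← mul_assoc,
                ← Real.rpow_add two_pos]
              simp
          _ ≤ 2 ^ r * (1 + ‖x‖) ^ (-r) := by gcongr
      calc ‖φ x‖ ^ p * ‖x‖ ^ α ≤ (D ^ p * ‖x‖ ^ (-(k : ℝ) * p)) * ‖x‖ ^ α := by
            gcongr
        _ = D ^ p * ‖x‖ ^ (-r) := by
            rw [mul_assoc, ← Real.rpow_add hx0]
            congr 1
            simp only [hrdef]
            ring_nf
        _ ≤ D ^ p * (2 ^ r * (1 + ‖x‖) ^ (-r)) := by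
            gcongr
        _ = D ^ p * 2 ^ r * (1 + ‖x‖) ^ (-r) := by ring
    calc ∫⁻ x in (ball (0 : E) 1)ᶜ, ENNReal.ofReal (‖φ x‖ ^ p * ‖x‖ ^ α)
        ≤ ∫⁻ x in (ball (0 : E) 1)ᶜ, ENNReal.ofReal (D ^ p * 2 ^ r * (1 + ‖x‖) ^ (-r)) :=
          setLIntegral_mono' measurableSet_ball.compl hbound
      _ ≤ ∫⁻ x : E, ENNReal.ofReal (D ^ p * 2 ^ r * (1 + ‖x‖) ^ (-r)) :=
          setLIntegral_le_lintegral _ _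
      _ = ENNReal.ofReal (D ^ p * 2 ^ r) * ∫⁻ x : E, ENNReal.ofReal ((1 + ‖x‖) ^ (-r)) := by
          simp_rw [ENNReal.ofReal_mul (by positivity : (0:ℝ) ≤ D ^ p * 2 ^ r)]
          exact lintegral_const_mul' _ _ ENNReal.ofReal_ne_top
      _ < ⊤ := by
          refine ENNReal.mul_lt_top ENNReal.ofReal_lt_top ?_
          refine finite_integral_one_add_norm ?_
          rw [hfr]
          exact hrn
end
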